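/- Let G be a one-way Sperner graph: an out-tree rooted at s together with k back-edges each leading from some vertex to s. Then ∑_{e∈E} t(e) = ∑_{j=1}^{k} t(c_j) − ∑_{v∈V} (ρ_out(G,v) − ρ_in(G,v))·t(l_v), where c₁,…,c_k are the elementary cycles of G. -/
import Mathlib

lemma fiber_card_sum {V E : Type*} [Fintype V] [Fintype E] [DecidableEq V]
    (f : E → V) (g : V → ℝ) :
    ∑ v : V, ((Finset.univ.filter fun e => f e = v).card : ℝ) * g v = ∑ e : E, g (f e) := by
  rw [← Finset.sum_fiberwise Finset.univ f (fun e => g (f e))]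
  refine Finset.sum_congr rfl fun v _ => ?_
  have h : ∑ e ∈ Finset.univ.filter (fun e => f e = v), g (f e)
      = ∑ _e ∈ Finset.univ.filter (fun e => f e = v), g v :=
    Finset.sum_congr rfl fun e he => by rw [(Finset.mem_filter.mp he).2]
  rw [h, Finset.sum_const, nsmul_eq_mul]

/-- One-way Sperner graph identity: for an out-tree rooted at `s` together with a set `B`
of back edges, each leading from some vertex to `s`,
`∑_{e∈E} t(e) = ∑_{back edges e} t(c_e) − ∑_v (ρ_out(v) − ρ_in(v))·t(l_v)`,
where `t(c_e) = L(tail e) + t(e)` is the length of the elementary cycle determined by the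
back edge `e`, and `L v = t(l_v)` is the length of the unique tree path from `s` to `v`. -/
theorem sperner_graph_length_identity
    {V E : Type*} [Fintype V] [Fintype E] [DecidableEq V] [DecidableEq E]
    (tail head : E → V) (s : V) (t : E → ℝ) (L : V → ℝ) (B : Finset E)
    (hB : ∀ e ∈ B, head e = s)
    (hLs : L s = 0)
    (hL : ∀ e ∉ B, L (head e) = L (tail e) + t e)
    (hins : (Finset.univ.filter fun e => head e = s ∧ e ∉ B).card = 0)
    (hin : ∀ v, v ≠ s → (Finset.univ.filter fun e => head e = v).card = 1) :
    ∑ e : E, t e =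
      (∑ e ∈ B, (L (tail e) + t e))
        - ∑ v : V, (((Finset.univ.filter fun e => tail e = v).card : ℝ)
            - ((Finset.univ.filter fun e => head e = v).card : ℝ)) * L v := by
  have hsplit : ∑ v : V, (((Finset.univ.filter fun e => tail e = v).card : ℝ)
      - ((Finset.univ.filter fun e => head e = v).card : ℝ)) * L v
      = ∑ e : E, L (tail e) - ∑ e : E, L (head e) := by
    rw [← fiber_card_sum tail L, ← fiber_card_sum head L, ← Finset.sum_sub_distrib]
    exact Finset.sum_congr rfl fun v _ => (sub_mul _ _ _)
  rw [hsplit]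
  have h1 : ∀ (f : E → ℝ), ∑ e : E, f e = ∑ e ∈ B, f e + ∑ e ∈ Bᶜ, f e :=
    fun f => (Finset.sum_add_sum_compl B f).symm
  rw [h1 t, h1 (fun e => L (tail e)), h1 (fun e => L (head e))]
  have hBh : ∑ e ∈ B, L (head e) = 0 := by
    rw [Finset.sum_congr rfl (fun e he => by rw [hB e he, hLs]), Finset.sum_const,
      smul_zero]
  have hBc : ∑ e ∈ Bᶜ, L (head e) = ∑ e ∈ Bᶜ, (L (tail e) + t e) :=
    Finset.sum_congr rfl fun e he => hL e (Finset.mem_compl.mp he)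
  have h2 : ∑ e ∈ Bᶜ, (L (tail e) + t e) = ∑ e ∈ Bᶜ, L (tail e) + ∑ e ∈ Bᶜ, t e :=
    Finset.sum_add_distrib
  have h3 : ∑ e ∈ B, (L (tail e) + t e) = ∑ e ∈ B, L (tail e) + ∑ e ∈ B, t e :=
    Finset.sum_add_distrib
  rw [hBh, hBc, h2, h3]
  ring
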